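/- Let X be a compact metric space, f : X → X continuous, s ∈ (0,1). Define for μ ∈ P(X), W_μ(s,r,n) = inf over finite (n,r)-generating sets E of Σ_{x∈E} g_{x,r,n}(μ)^s. Then μ ↦ W_μ(s,r,n) is upper-semicontinuous on P(X) with the weak topology, and consequently, for each r > 0, D(r) = {μ ∈ P(X) : liminf_{n→∞} log W_μ(s,r,n) / ((1−s)n) = 0} is a G_δ subset of P(X). -/

import Mathlib

/-!
For a fixed `(n, r)`-generating set `E`, the map `μ ↦ Σ_{x ∈ E} g_{x,r,n}(μ) ^ s` is weakly
continuous, because each `g_{x,r,n}(μ)` integrates a bounded continuous bump; `W_μ(s, r, n)` is the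
infimum of these maps, hence upper semicontinuous.

Since the bumps of a generating set sum to at least `1` and `g ≤ g ^ s` on `[0, 1]`, we have
`1 ≤ W_μ(s, r, n)`; since a finite `r / 2`-net `F` of `X` yields `(n, r)`-generating sets with at
most `K ^ n` points, `K = #F`, also `W_μ(s, r, n) ≤ K ^ n`. So
`a_n(μ) = log W_μ(s, r, n) / ((1 - s) n)` is upper semicontinuous with values in a fixed interval
`[0, C]`, and `liminf a_n(μ) = 0` says that for every `k`, `a_n(μ) < 1 / (k + 1)` for infinitely
many `n`: a countable intersection of sets `⋂_N ⋃_{n ≥ N} {a_n < 1 / (k + 1)}` with open pieces,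
i.e. a `G_δ` set.
-/

open Metric

/-- The Bowen metric of order `n`: `d_n(x,y) = max{d(f^i x, f^i y) : 0 ≤ i < n}`. -/
noncomputable def bowenDist {X : Type*} [PseudoMetricSpace X] (f : X → X) (n : ℕ) (x y : X) : ℝ :=
  (((Finset.range n).sup fun i => nndist (f^[i] x) (f^[i] y) : NNReal) : ℝ)

/-- The open Bowen ball of size `n` and radius `ε` centered at `x`. -/
def bowenBall {X : Type*} [PseudoMetricSpace X] (f : X → X) (n : ℕ) (x : X) (ε : ℝ) : Set X :=
  {y | bowenDist f n x y < ε}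

/-- The piecewise-linear bump function of `d_n(x,·)` at levels `ε, 2ε`: equal to `1` when
`d_n(x,y) ≤ ε`, to `2 − d_n(x,y)/ε` when `ε ≤ d_n(x,y) ≤ 2ε`, and to `0` when
`d_n(x,y) ≥ 2ε`. -/
noncomputable def bowenBump {X : Type*} [PseudoMetricSpace X] (f : X → X) (n : ℕ) (ε : ℝ)
    (x y : X) : ℝ :=
  max 0 (min 1 (2 - bowenDist f n x y / ε))

open MeasureTheory Filter

/-- `W_μ(s,r,n)`: the infimum, over finite `(n,r)`-generating sets `E` of `X`, of
`Σ_{x∈E} g_{x,r,n}(μ)^s`. -/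
noncomputable def Wfun {X : Type*} [MetricSpace X] [MeasurableSpace X]
    (f : X → X) (s r : ℝ) (n : ℕ) (μ : Measure X) : ℝ :=
  ⨅ E : {E : Finset X // ∀ y : X, ∃ x ∈ E, y ∈ bowenBall f n x r},
    ∑ x ∈ (E : Finset X), (∫ y, bowenBump f n r x y ∂μ) ^ s

open Set Dynamics SetRel BoundedContinuousFunction

section BowenBall

variable {X : Type*} [PseudoMetricSpace X] {f : X → X} {n : ℕ} {r : ℝ}

lemma mem_bowenBall_iff (hr : 0 < r) {x y : X} :
    y ∈ bowenBall f n x r ↔ ∀ k < n, dist (f^[k] x) (f^[k] y) < r := by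
  rw [bowenBall, mem_ofPred_eq, bowenDist, ← Real.lt_toNNReal_iff_coe_lt,
    Finset.sup_lt_iff (Real.toNNReal_pos.2 hr)]
  simp only [Finset.mem_range, Real.lt_toNNReal_iff_coe_lt, coe_nndist]

lemma continuous_bowenDist (hf : Continuous f) (n : ℕ) (x : X) : Continuous (bowenDist f n x) :=
  NNReal.continuous_coe.comp <| Continuous.finset_sup_apply fun k _ =>
    continuous_const.nndist (hf.iterate k)

lemma isDynCoverOf_univ_iff (hr : 0 < r) (E : Set X) :
    IsDynCoverOf f univ {p | dist p.1 p.2 < r} n E ↔ ∀ y, ∃ x ∈ E, y ∈ bowenBall f n x r := by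
  simp only [IsDynCoverOf, SetRel.IsCover, mem_univ, forall_const, mem_bowenBall_iff hr]
  simp [mem_dynEntourage, dist_comm]

end BowenBall

instance SetRel.isSymm_setOf_dist_lt {X : Type*} [PseudoMetricSpace X] (ε : ℝ) :
    SetRel.IsSymm {p : X × X | dist p.1 p.2 < ε} where
  symm _ _ h := by simpa [dist_comm] using h

lemma setOf_dist_lt_comp_subset {X : Type*} [PseudoMetricSpace X] (ε δ : ℝ) :
    {p : X × X | dist p.1 p.2 < ε} ○ {p : X × X | dist p.1 p.2 < δ} ⊆
      {p | dist p.1 p.2 < ε + δ} := by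
  rintro ⟨x, z⟩ ⟨y, hxy, hyz⟩
  exact (dist_triangle x y z).trans_lt (add_lt_add hxy hyz)

lemma exists_card_le_pow_bowenBall_cover {X : Type*} [PseudoMetricSpace X] [CompactSpace X]
    (f : X → X) {r : ℝ} (hr : 0 < r) :
    ∃ K : ℕ, ∀ n, ∃ E : Finset X, (∀ y, ∃ x ∈ E, y ∈ bowenBall f n x r) ∧ E.card ≤ K ^ n := by
  obtain ⟨F, hF⟩ := exists_isDynCoverOf_of_isCompact_invariant isCompact_univ (mapsTo_univ f univ)
    (dist_mem_uniformity (half_pos hr)) 1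
  refine ⟨F.card, fun n => ?_⟩
  obtain ⟨E, hE, hcard⟩ := hF.iterate_le_pow (mapsTo_univ f univ) n
  rw [one_mul] at hE
  have hcover := (isDynCoverOf_univ_iff hr _).1 <| hE.of_entourage_subset <| by
    simpa using setOf_dist_lt_comp_subset (X := X) (r / 2) (r / 2)
  exact ⟨E, by simpa using hcover, hcard⟩

section BowenBump

variable {X : Type*} [PseudoMetricSpace X] {f : X → X} {n : ℕ} {r : ℝ}

lemma bowenBump_nonneg (x y : X) : 0 ≤ bowenBump f n r x y := le_max_left _ _

lemma bowenBump_le_one (x y : X) : bowenBump f n r x y ≤ 1 :=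
  max_le zero_le_one (min_le_left _ _)

lemma bowenBump_eq_one (hr : 0 < r) {x y : X} (hy : y ∈ bowenBall f n x r) :
    bowenBump f n r x y = 1 := by
  have : bowenDist f n x y / r < 1 := (div_lt_one hr).2 hy
  rw [bowenBump, min_eq_left (by linarith), max_eq_right zero_le_one]

lemma continuous_bowenBump (hf : Continuous f) (n : ℕ) (r : ℝ) (x : X) :
    Continuous (bowenBump f n r x) :=
  continuous_const.max <| continuous_const.min <|
    continuous_const.sub <| (continuous_bowenDist hf n x).div_const r

noncomputable def bowenBumpBCF (hf : Continuous f) (n : ℕ) (r : ℝ) (x : X) : X →ᵇ ℝ :=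
  .ofNormedAddCommGroup (bowenBump f n r x) (continuous_bowenBump hf n r x) 1 fun y => by
    rw [Real.norm_of_nonneg (bowenBump_nonneg x y)]
    exact bowenBump_le_one x y

variable [MeasurableSpace X]

lemma integral_bowenBump_nonneg (μ : Measure X) (x : X) : 0 ≤ ∫ y, bowenBump f n r x y ∂μ :=
  integral_nonneg (bowenBump_nonneg x)

lemma integral_bowenBump_le_one (μ : Measure X) [IsProbabilityMeasure μ] (x : X) :
    ∫ y, bowenBump f n r x y ∂μ ≤ 1 := by
  have h := norm_integral_le_of_norm_le_const (μ := μ) (f := bowenBump f n r x) (C := 1) <|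
    .of_forall fun y => by
      rw [Real.norm_of_nonneg (bowenBump_nonneg x y)]
      exact bowenBump_le_one x y
  simpa using (le_abs_self _).trans h

variable [OpensMeasurableSpace X]

lemma continuous_integral_bowenBump (hf : Continuous f) (n : ℕ) (r : ℝ) (x : X) :
    Continuous fun μ : ProbabilityMeasure X => ∫ y, bowenBump f n r x y ∂(μ : Measure X) :=
  ProbabilityMeasure.continuous_integral_boundedContinuousFunction (bowenBumpBCF hf n r x)

lemma one_le_sum_integral_bowenBump (hf : Continuous f) (hr : 0 < r) (μ : Measure X)
    [IsProbabilityMeasure μ] {E : Finset X} (hE : ∀ y, ∃ x ∈ E, y ∈ bowenBall f n x r) :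
    1 ≤ ∑ x ∈ E, ∫ y, bowenBump f n r x y ∂μ := by
  have hint : ∀ x ∈ E, Integrable (bowenBump f n r x) μ := fun x _ =>
    (bowenBumpBCF hf n r x).integrable μ
  have hsum : ∀ y, 1 ≤ ∑ x ∈ E, bowenBump f n r x y := fun y => by
    obtain ⟨x, hxE, hy⟩ := hE y
    rw [← bowenBump_eq_one hr hy]
    exact Finset.single_le_sum (fun x _ => bowenBump_nonneg x y) hxE
  rw [← integral_finsetSum E hint]
  simpa using integral_mono (integrable_const 1) (integrable_finsetSum E hint) hsum

end BowenBump

section Wfun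

variable {X : Type*} [MetricSpace X] [MeasurableSpace X] {f : X → X} {s r : ℝ} {n : ℕ}

lemma bddBelow_range_sum_rpow_integral_bowenBump (μ : Measure X) :
    BddBelow (range fun E : {E : Finset X // ∀ y, ∃ x ∈ E, y ∈ bowenBall f n x r} =>
      ∑ x ∈ (E : Finset X), (∫ y, bowenBump f n r x y ∂μ) ^ s) :=
  ⟨0, by
    rintro _ ⟨E, rfl⟩
    exact Finset.sum_nonneg fun x _ => Real.rpow_nonneg (integral_bowenBump_nonneg μ x) s⟩

lemma Wfun_le_card (hs : 0 ≤ s) (μ : Measure X) [IsProbabilityMeasure μ] {E : Finset X}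
    (hE : ∀ y, ∃ x ∈ E, y ∈ bowenBall f n x r) : Wfun f s r n μ ≤ E.card :=
  (ciInf_le (bddBelow_range_sum_rpow_integral_bowenBump μ) ⟨E, hE⟩).trans <| by
    simpa using Finset.sum_le_card_nsmul E _ 1 fun x _ =>
      Real.rpow_le_one (integral_bowenBump_nonneg μ x) (integral_bowenBump_le_one μ x) hs

lemma exists_Wfun_le_pow [CompactSpace X] (hs : 0 ≤ s) (hr : 0 < r) :
    ∃ K : ℕ, ∀ n (μ : Measure X) [IsProbabilityMeasure μ], Wfun f s r n μ ≤ (K : ℝ) ^ n := by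
  obtain ⟨K, hK⟩ := exists_card_le_pow_bowenBall_cover f hr
  refine ⟨K, fun n μ _ => ?_⟩
  obtain ⟨E, hE, hcard⟩ := hK n
  exact (Wfun_le_card hs μ hE).trans (mod_cast hcard)

variable [OpensMeasurableSpace X]

lemma one_le_Wfun [CompactSpace X] (hf : Continuous f) (hs : s ≤ 1) (hr : 0 < r)
    (μ : Measure X) [IsProbabilityMeasure μ] : 1 ≤ Wfun f s r n μ := by
  obtain ⟨E, hE, -⟩ := (exists_card_le_pow_bowenBall_cover f hr).choose_spec n
  have : Nonempty {E : Finset X // ∀ y, ∃ x ∈ E, y ∈ bowenBall f n x r} := ⟨⟨E, hE⟩⟩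
  refine le_ciInf fun E => (one_le_sum_integral_bowenBump hf hr μ E.2).trans <|
    Finset.sum_le_sum fun x _ => Real.self_le_rpow_of_le_one (integral_bowenBump_nonneg μ x)
      (integral_bowenBump_le_one μ x) hs

lemma upperSemicontinuous_Wfun (hf : Continuous f) (hs : 0 ≤ s) (r : ℝ) (n : ℕ) :
    UpperSemicontinuous fun μ : ProbabilityMeasure X => Wfun f s r n μ := by
  have hcont : ∀ E : Finset X, Continuous fun μ : ProbabilityMeasure X =>
      ∑ x ∈ E, (∫ y, bowenBump f n r x y ∂(μ : Measure X)) ^ s := fun E =>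
    continuous_finsetSum _ fun x _ =>
      (Real.continuous_rpow_const hs).comp (continuous_integral_bowenBump hf n r x)
  exact upperSemicontinuous_ciInf
    (fun μ : ProbabilityMeasure X => bddBelow_range_sum_rpow_integral_bowenBump (f := f) (s := s)
      (μ : Measure X)) fun E => (hcont E).upperSemicontinuous

end Wfun

section Semicontinuity

variable {α : Type*} [TopologicalSpace α]

lemma UpperSemicontinuous.log {g : α → ℝ} (hg : UpperSemicontinuous g) (hpos : ∀ x, 0 < g x) :
    UpperSemicontinuous fun x => Real.log (g x) := by
  refine upperSemicontinuous_iff_isOpen_preimage.2 fun y => ?_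
  have : (fun x => Real.log (g x)) ⁻¹' Iio y = g ⁻¹' Iio (Real.exp y) := by
    ext x
    simp [Real.log_lt_iff_lt_exp (hpos x)]
  rw [this]
  exact hg.isOpen_preimage _

lemma UpperSemicontinuous.div_const {g : α → ℝ} (hg : UpperSemicontinuous g) {c : ℝ}
    (hc : 0 ≤ c) : UpperSemicontinuous fun x => g x / c :=
  (continuous_id.div_const c).comp_upperSemicontinuous hg fun _ _ h =>
    div_le_div_of_nonneg_right h hc

lemma isGδ_setOf_frequently_mem {U : ℕ → Set α} (hU : ∀ n, IsOpen (U n)) :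
    IsGδ {x | ∃ᶠ n in atTop, x ∈ U n} := by
  have : {x | ∃ᶠ n in atTop, x ∈ U n} = ⋂ N, ⋃ n ≥ N, U n := by
    ext
    simp [frequently_atTop]
  rw [this]
  exact .iInter fun N => (isOpen_biUnion fun n _ => hU n).isGδ

lemma isGδ_setOf_liminf_eq_zero {a : ℕ → α → ℝ} (ha : ∀ n, UpperSemicontinuous (a n))
    (h0 : ∀ n x, 0 ≤ a n x) (hbdd : ∀ x, BddAbove (range fun n => a n x)) :
    IsGδ {x | liminf (fun n => a n x) atTop = 0} := by
  have : {x | liminf (fun n => a n x) atTop = 0} =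
      ⋂ k : ℕ, {x | ∃ᶠ n in atTop, a n x < 1 / (k + 1)} := by
    ext x
    have hbelow : IsBoundedUnder (· ≥ ·) atTop fun n => a n x :=
      isBoundedUnder_of ⟨0, fun n => h0 n x⟩
    have habove : IsCoboundedUnder (· ≥ ·) atTop fun n => a n x :=
      (hbdd x).isBoundedUnder_of_range.isCoboundedUnder_ge
    have hnonneg : 0 ≤ liminf (fun n => a n x) atTop :=
      le_liminf_of_le habove (.of_forall (h0 · x))
    simp only [mem_ofPred_eq, mem_iInter]
    rw [le_antisymm_iff, and_iff_left hnonneg, liminf_le_iff habove hbelow]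
    refine ⟨fun h k => h _ Nat.one_div_pos_of_nat, fun h y hy => ?_⟩
    obtain ⟨k, hk⟩ := exists_nat_one_div_lt hy
    exact (h k).mono fun n hn => hn.trans hk
  rw [this]
  exact .iInter fun k => isGδ_setOf_frequently_mem fun n => (ha n).isOpen_preimage _

end Semicontinuity

theorem stmt16 {X : Type*} [MetricSpace X] [CompactSpace X] [MeasurableSpace X] [BorelSpace X]
    (f : X → X) (hf : Continuous f) (s : ℝ) (hs : s ∈ Set.Ioo (0 : ℝ) 1) :
    (∀ r > (0 : ℝ), ∀ n : ℕ,
        UpperSemicontinuous fun μ : ProbabilityMeasure X => Wfun f s r n (μ : Measure X)) ∧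
      ∀ r > (0 : ℝ),
        IsGδ {μ : ProbabilityMeasure X |
          liminf (fun n : ℕ =>
            Real.log (Wfun f s r n (μ : Measure X)) / ((1 - s) * n)) atTop = 0} := by
  have hs1 : 0 < 1 - s := sub_pos.2 hs.2
  have hden : ∀ n : ℕ, 0 ≤ (1 - s) * n := fun n => by positivity
  refine ⟨fun r _ n => upperSemicontinuous_Wfun hf hs.1.le r n, fun r hr => ?_⟩
  have hW : ∀ n (μ : ProbabilityMeasure X), 1 ≤ Wfun f s r n μ := fun n μ =>
    one_le_Wfun hf hs.2.le hr μ
  obtain ⟨K, hK⟩ := exists_Wfun_le_pow (f := f) hs.1.le hr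
  refine isGδ_setOf_liminf_eq_zero (fun n => ?_) (fun n μ => ?_)
    fun μ => ⟨Real.log K / (1 - s), ?_⟩
  · exact ((upperSemicontinuous_Wfun hf hs.1.le r n).log fun μ =>
      one_pos.trans_le (hW n μ)).div_const (hden n)
  · exact div_nonneg (Real.log_nonneg (hW n μ)) (hden n)
  rintro _ ⟨n, rfl⟩
  have hK1 : 1 ≤ (K : ℝ) := by simpa using (hW 1 μ).trans (hK 1 μ)
  have hlog : Real.log (Wfun f s r n μ) ≤ n * Real.log K := by
    rw [← Real.log_pow]
    exact Real.log_le_log (one_pos.trans_le (hW n μ)) (hK n μ)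
  refine div_le_of_le_mul₀ (hden n) (div_nonneg (Real.log_nonneg hK1) hs1.le) (hlog.trans_eq ?_)
  field_simp
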